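/- Let J be a graded ideal of the ring R = F₂[q,v]/(q³) (graded with deg q = 1 and deg v = 4) such that the localization of J away from v equals the localization of R away from v (equivalently, v^l ∈ J for some l ≥ 0). Then there exist natural numbers i ≥ j ≥ k ≥ 0 such that J is exactly the ideal of R generated by the three elements v^i, q·v^j and q²·v^k. -/

import Mathlib

/-!
STATEMENT 0: A graded ideal `J` of `R = F₂[q,v]/(q³)` (with `deg q = 1`, `deg v = 4`)
whose localization away from `v` is all of `v⁻¹R` (equivalently, `v^l ∈ J` for some `l`)
is of the form `(v^i, q v^j, q² v^k)` with `i ≥ j ≥ k ≥ 0`.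
-/

open MvPolynomial

noncomputable section

/-- The ideal `(q³)` in `F₂[q,v]`, where `q = X 0` and `v = X 1`. -/
def relIdeal : Ideal (MvPolynomial (Fin 2) (ZMod 2)) := Ideal.span {X 0 ^ 3}

/-- The ring `R = F₂[q,v]/(q³)`. -/
abbrev RR := MvPolynomial (Fin 2) (ZMod 2) ⧸ relIdeal

/-- The class of `q` in `R`. -/
def q : RR := Ideal.Quotient.mk relIdeal (X 0)

/-- The class of `v` in `R`. -/
def v : RR := Ideal.Quotient.mk relIdeal (X 1)

/-- The weights of the grading: `deg q = 1`, `deg v = 4`. -/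
def wt : Fin 2 → ℕ := ![1, 4]

/-- An element of `R` is homogeneous of degree `d` if it is the image of a
weighted-homogeneous polynomial of degree `d` (weights `deg q = 1`, `deg v = 4`). -/
def IsHomog (x : RR) (d : ℕ) : Prop :=
  ∃ p : MvPolynomial (Fin 2) (ZMod 2),
    p.IsWeightedHomogeneous wt d ∧ Ideal.Quotient.mk relIdeal p = x

/-!
A homogeneous element of `R` is `0` or a monomial `q ^ a * v ^ b` with `a ≤ 2`, because each
graded piece is spanned by a single monomial; hence `J` is a monomial ideal. For `a ≤ 2` let
`e a` be the least `b` with `q ^ a * v ^ b ∈ J`, which exists since `v ^ l ∈ J`. The monomials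
`q ^ a * v ^ b` in `J` are then exactly those with `b ≥ e a`, so `J = (v ^ e 0, q v ^ e 1,
q² v ^ e 2)`, and `q * (q ^ a * v ^ e a) ∈ J` gives `e (a + 1) ≤ e a`.
-/

section LeastExponent

variable {R : Type*} [CommSemiring R] (J : Ideal R) (x y : R)

/-- This is `0` when no `x ^ a * y ^ n` lies in `J`, since `sInf ∅ = 0`. -/
def leastExp (a : ℕ) : ℕ := sInf {n | x ^ a * y ^ n ∈ J}

variable {J x y}

lemma exists_pow_mul_pow_mem {l : ℕ} (hy : y ^ l ∈ J) (a : ℕ) : ∃ n, x ^ a * y ^ n ∈ J :=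
  ⟨l, J.mul_mem_left _ hy⟩

lemma pow_mul_pow_leastExp_mem {a : ℕ} (h : ∃ n, x ^ a * y ^ n ∈ J) :
    x ^ a * y ^ leastExp J x y a ∈ J :=
  Nat.sInf_mem h

lemma leastExp_le {a b : ℕ} (h : x ^ a * y ^ b ∈ J) : leastExp J x y a ≤ b :=
  Nat.sInf_le h

lemma leastExp_succ_le {a : ℕ} (h : ∃ n, x ^ a * y ^ n ∈ J) :
    leastExp J x y (a + 1) ≤ leastExp J x y a := by
  apply leastExp_le
  rw [pow_succ', mul_assoc]
  exact J.mul_mem_left x (pow_mul_pow_leastExp_mem h)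

lemma pow_mul_pow_mem_span_singleton (a : ℕ) {n b : ℕ} (h : n ≤ b) :
    x ^ a * y ^ b ∈ Ideal.span {x ^ a * y ^ n} :=
  Ideal.mem_span_singleton.2 (mul_dvd_mul_left _ (pow_dvd_pow y h))

theorem eq_span_leastExp_of_eq_span {S : Set R}
    (hS : ∀ s ∈ S, s = 0 ∨ ∃ a ≤ 2, ∃ b, s = x ^ a * y ^ b) (hJ : J = Ideal.span S)
    {l : ℕ} (hy : y ^ l ∈ J) :
    J = Ideal.span {y ^ leastExp J x y 0, x * y ^ leastExp J x y 1,
      x ^ 2 * y ^ leastExp J x y 2} := by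
  apply le_antisymm
  · refine hJ.le.trans (Ideal.span_le.2 fun s hs ↦ ?_)
    rcases hS s hs with rfl | ⟨a, ha, b, rfl⟩
    · exact zero_mem _
    have hsJ : x ^ a * y ^ b ∈ J := hJ ▸ Ideal.subset_span hs
    refine Ideal.span_mono ?_ (pow_mul_pow_mem_span_singleton a (leastExp_le hsJ))
    interval_cases a <;> simp
  · rw [Ideal.span_le]
    have hmem := fun a ↦ pow_mul_pow_leastExp_mem (exists_pow_mul_pow_mem (x := x) hy a)
    simp only [Set.insert_subset_iff, Set.singleton_subset_iff, SetLike.mem_coe]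
    exact ⟨by simpa using hmem 0, by simpa using hmem 1, hmem 2⟩

end LeastExponent

lemma q_pow_eq_zero {a : ℕ} (h : 3 ≤ a) : q ^ a = 0 := by
  have hq3 : Ideal.Quotient.mk relIdeal (X 0 ^ 3) = 0 :=
    Ideal.Quotient.eq_zero_iff_mem.2 (Ideal.subset_span rfl)
  obtain ⟨k, rfl⟩ := Nat.exists_eq_add_of_le h
  rw [pow_add, q, ← map_pow, hq3, zero_mul]

lemma weight_wt (μ : Fin 2 →₀ ℕ) : Finsupp.weight wt μ = μ 0 + 4 * μ 1 := by
  simp [Finsupp.weight_apply, Finsupp.sum_fintype, wt, mul_comm]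

lemma mk_monomial (μ : Fin 2 →₀ ℕ) (c : ZMod 2) :
    Ideal.Quotient.mk relIdeal (monomial μ c) =
      Ideal.Quotient.mk relIdeal (C c) * (q ^ μ 0 * v ^ μ 1) := by
  simp [monomial_eq, Finsupp.prod_fintype, q, v]

lemma mk_monomial_eq_zero_of_weight_eq {μ : Fin 2 →₀ ℕ} {d : ℕ} (c : ZMod 2)
    (hμ : Finsupp.weight wt μ = d)
    (hne : μ ≠ Finsupp.single 0 (d % 4) + Finsupp.single 1 (d / 4)) :
    Ideal.Quotient.mk relIdeal (monomial μ c) = 0 := by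
  rw [weight_wt] at hμ
  have h3 : 3 ≤ μ 0 := by
    by_contra! h
    exact hne (Finsupp.ext fun i ↦ by fin_cases i <;> simp <;> omega)
  rw [mk_monomial, q_pow_eq_zero h3, zero_mul, mul_zero]

lemma IsHomog.exists_eq_mul {x : RR} {d : ℕ} (h : IsHomog x d) :
    ∃ c : ZMod 2, x = Ideal.Quotient.mk relIdeal (C c) * (q ^ (d % 4) * v ^ (d / 4)) := by
  obtain ⟨p, hp, rfl⟩ := h
  set μ₀ : Fin 2 →₀ ℕ := Finsupp.single 0 (d % 4) + Finsupp.single 1 (d / 4)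
  refine ⟨coeff μ₀ p, ?_⟩
  conv_lhs => rw [← p.support_sum_monomial_coeff, map_sum]
  rw [Finset.sum_eq_single μ₀, mk_monomial]
  · simp [μ₀]
  · exact fun μ hμ hne ↦ mk_monomial_eq_zero_of_weight_eq _ (hp (mem_support_iff.1 hμ)) hne
  · intro hμ₀
    rw [notMem_support_iff.1 hμ₀, monomial_zero, map_zero]

lemma IsHomog.eq_zero_or_eq_pow_mul_pow {x : RR} {d : ℕ} (h : IsHomog x d) :
    x = 0 ∨ ∃ a ≤ 2, ∃ b, x = q ^ a * v ^ b := by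
  obtain ⟨c, rfl⟩ := h.exists_eq_mul
  obtain rfl | rfl : c = 0 ∨ c = 1 :=
    (show ∀ c : ZMod 2, c = 0 ∨ c = 1 by decide) c
  · simp
  by_cases hd : d % 4 ≤ 2
  · exact .inr ⟨d % 4, hd, d / 4, by simp⟩
  · simp [q_pow_eq_zero (show 3 ≤ d % 4 by omega)]

theorem graded_ideal_classification (J : Ideal RR)
    (hgraded : ∃ S : Set RR, (∀ x ∈ S, ∃ d : ℕ, IsHomog x d) ∧ J = Ideal.span S)
    (hloc : ∃ l : ℕ, v ^ l ∈ J) :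
    ∃ i j k : ℕ, k ≤ j ∧ j ≤ i ∧
      J = Ideal.span {v ^ i, q * v ^ j, q ^ 2 * v ^ k} := by
  obtain ⟨S, hS, hJ⟩ := hgraded
  obtain ⟨l, hl⟩ := hloc
  refine ⟨leastExp J q v 0, leastExp J q v 1, leastExp J q v 2,
    leastExp_succ_le (exists_pow_mul_pow_mem hl 1), leastExp_succ_le (exists_pow_mul_pow_mem hl 0),
    eq_span_leastExp_of_eq_span (fun s hs ↦ ?_) hJ hl⟩
  obtain ⟨d, hd⟩ := hS s hs
  exact hd.eq_zero_or_eq_pow_mul_pow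

end
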